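/- Let k ≥ 1 be an integer, let a : ℕ × ℕ → O_L, and for s, z ∈ m_L set F(s, z) = Σ_{m,n ≥ 0} a_{m,n} s^m z^n/(m! n!) (this converges in L). Suppose s₀ ∈ m_L is such that for some n the coefficient c_n(s₀) = Σ_{m≥0} a_{m,n} s₀^m/m! of the specialization satisfies |c_n(s₀)| > p^{-k}. Then there exists a natural number N such that for every s ∈ m_L with |s − s₀| ≤ p^{-k}, the set {z ∈ m_L : F(s, z) = 0} has at most N elements; in particular, for every such s the function z ↦ F(s, z) is not identically zero on m_L. -/

import Mathlib

/-!
Strassmann's theorem: if `∑ bₙ zⁿ` converges on the closed ball of radius `r` and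
`‖bₘ‖ rᵐ < ‖bₙ‖ rⁿ` for all `m > n`, the series has at most `n` zeros in that ball, because
dividing by `z - z₀` at a zero `z₀` turns `n` into `n - 1`.

Since `p` is odd, `v_p(m!) < m / 2` for `m ≥ 1`, so `‖zᵐ / m!‖ ≤ p^{-⌈m/2⌉}` on `m_L`, which is
the closed ball of radius `1/p`. This makes `F(s, z) = ∑ₙ cₙ(s) zⁿ / n!` converge, gives
`|cₙ(s) - cₙ(s₀)| ≤ |s - s₀|`, hence `|c_{n₀}(s)| = |c_{n₀}(s₀)| > p^{-k}`, and then the index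
`n` above can be taken `≤ 2 (k + n₀)` for `z ↦ F(s, z)`, uniformly in `s`. As `m_L` is
infinite, a function with finitely many zeros on it cannot vanish identically.
-/

open Filter Topology
open scoped Nat

section Ultrametric

variable {E : Type*} [NormedAddCommGroup E] [IsUltrametricDist E]

lemma norm_add_eq_left_of_norm_lt {x y : E} (h : ‖y‖ < ‖x‖) : ‖x + y‖ = ‖x‖ := by
  rw [IsUltrametricDist.norm_add_eq_max_of_norm_ne_norm h.ne', max_eq_left h.le]

lemma norm_tsum_lt_of_forall_lt {ι : Type*} [Nonempty ι] {f : ι → E} (hf : Summable f)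
    {c : ℝ} (h : ∀ i, ‖f i‖ < c) : ‖∑' i, f i‖ < c := by
  have hc : 0 < c := (norm_nonneg _).trans_lt (h (Classical.arbitrary ι))
  obtain ⟨s, hs⟩ := (Metric.tendsto_nhds.1 hf.hasSum c hc).exists
  obtain ⟨i, -, hi⟩ := IsUltrametricDist.exists_norm_finsetSum_le s f
  rw [dist_comm, dist_eq_norm] at hs
  rw [← add_sub_cancel (∑ i ∈ s, f i) (∑' i, f i)]
  exact (IsUltrametricDist.norm_add_le_max _ _).trans_lt (max_lt (hi.trans_lt (h i)) hs)

lemma tendsto_fst_add_snd_cofinite_atTop :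
    Tendsto (fun q : ℕ × ℕ => q.1 + q.2) cofinite atTop := by
  rw [← coprod_cofinite, Filter.coprod, tendsto_sup, Nat.cofinite_eq_atTop]
  exact ⟨tendsto_atTop_mono (fun q => Nat.le_add_right _ _) tendsto_comap,
    tendsto_atTop_mono (fun q => Nat.le_add_left _ _) tendsto_comap⟩

lemma summable_of_norm_le_of_tendsto [CompleteSpace E] {f : ℕ × ℕ → E} {B : ℕ → ℝ}
    (hB : Tendsto B atTop (𝓝 0)) (h : ∀ q, ‖f q‖ ≤ B (q.1 + q.2)) : Summable f := by
  refine NonarchimedeanAddGroup.summable_of_tendsto_cofinite_zero ?_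
  rw [tendsto_zero_iff_norm_tendsto_zero]
  exact squeeze_zero (fun q => norm_nonneg _) h (hB.comp tendsto_fst_add_snd_cofinite_atTop)

lemma norm_pow_sub_pow_le {L : Type*} [NormedField L] [IsUltrametricDist L] {r : ℝ} {x y : L}
    (hx : ‖x‖ ≤ r) (hy : ‖y‖ ≤ r) (m : ℕ) : ‖x ^ m - y ^ m‖ ≤ r ^ (m - 1) * ‖x - y‖ := by
  have hr : 0 ≤ r := (norm_nonneg x).trans hx
  rw [← geom_sum₂_mul, norm_mul]
  gcongr
  refine IsUltrametricDist.norm_sum_le_of_forall_le_of_nonneg (by positivity) fun i hi => ?_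
  rw [norm_mul, norm_pow, norm_pow]
  calc ‖x‖ ^ i * ‖y‖ ^ (m - 1 - i) ≤ r ^ i * r ^ (m - 1 - i) := by gcongr
    _ = r ^ (m - 1) := by rw [← pow_add]; congr 1; grind

end Ultrametric

section DoubleSeries

variable {E : Type*} [NormedAddCommGroup E] [CompleteSpace E] {f : ℕ × ℕ → E}

lemma Summable.comp_succ_fst (hf : Summable f) : Summable fun q : ℕ × ℕ => f (q.1 + 1, q.2) :=
  hf.comp_injective (Prod.map_injective.2 ⟨add_left_injective 1, Function.injective_id⟩)

lemma Summable.comp_succ_snd (hf : Summable f) : Summable fun q : ℕ × ℕ => f (q.1, q.2 + 1) :=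
  hf.comp_injective (Prod.map_injective.2 ⟨Function.injective_id, add_left_injective 1⟩)

lemma Summable.tsum_prod_eq_zero_add_fst (hf : Summable f) :
    ∑' q, f q = ∑' i, f (0, i) + ∑' q : ℕ × ℕ, f (q.1 + 1, q.2) := by
  rw [hf.tsum_prod, hf.prod.tsum_eq_zero_add, hf.comp_succ_fst.tsum_prod]

lemma Summable.tsum_prod_eq_zero_add_snd (hf : Summable f) :
    ∑' q, f q = ∑' j, f (j, 0) + ∑' q : ℕ × ℕ, f (q.1, q.2 + 1) := by
  calc ∑' q, f q = ∑' q : ℕ × ℕ, f q.swap := ((Equiv.prodComm ℕ ℕ).tsum_eq f).symm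
    _ = ∑' j, f (j, 0) + ∑' q : ℕ × ℕ, f (q.2, q.1 + 1) := hf.prod_symm.tsum_prod_eq_zero_add_fst
    _ = ∑' j, f (j, 0) + ∑' q : ℕ × ℕ, f (q.1, q.2 + 1) := by
      rw [← (Equiv.prodComm ℕ ℕ).tsum_eq fun q => f (q.1, q.2 + 1)]
      rfl

end DoubleSeries

lemma tendsto_shift_mul_pow {u : ℕ → ℝ} {r : ℝ} (hr : 0 < r)
    (hu : Tendsto (fun n => u n * r ^ n) atTop (𝓝 0)) (k : ℕ) :
    Tendsto (fun i => u (k + i) * r ^ i) atTop (𝓝 0) := by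
  have h := (hu.comp (tendsto_add_atTop_nat k)).div_const (r ^ k)
  rw [zero_div] at h
  refine h.congr fun i => ?_
  simp only [Function.comp_apply, add_comm i k, pow_add]
  field_simp

lemma exists_le_forall_lt_of_lt {f : ℕ → ℝ} {n₀ N : ℕ} (hn₀ : n₀ ≤ N)
    (h : ∀ m, N < m → f m < f n₀) : ∃ n ≤ N, ∀ m, n < m → f m < f n := by
  induction N generalizing n₀ with
  | zero => exact ⟨0, le_rfl, Nat.le_zero.1 hn₀ ▸ h⟩
  | succ N ih =>
    by_cases hlast : ∀ m, N + 1 < m → f m < f (N + 1)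
    · exact ⟨N + 1, le_rfl, hlast⟩
    push Not at hlast
    obtain ⟨m, hm, hfm⟩ := hlast
    have hn₀N : n₀ ≤ N := by
      by_contra hn
      exact (h m hm).not_ge (by rwa [show n₀ = N + 1 by omega])
    obtain ⟨n, hn, hdom⟩ := ih hn₀N fun m' hm' => by
      rcases (Nat.succ_le_of_lt hm').eq_or_lt with rfl | hm'
      · exact hfm.trans_lt (h m hm)
      · exact h m' hm'
    exact ⟨n, hn.trans N.le_succ, hdom⟩

section PowerSeries

variable {L : Type*} [NormedField L] [IsUltrametricDist L] [CompleteSpace L] {r : ℝ} {b : ℕ → L}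

lemma summable_mul_pow_of_tendsto (hb : Tendsto (fun n => ‖b n‖ * r ^ n) atTop (𝓝 0))
    {z : L} (hz : ‖z‖ ≤ r) : Summable fun n => b n * z ^ n := by
  refine NonarchimedeanAddGroup.summable_of_tendsto_cofinite_zero ?_
  rw [Nat.cofinite_eq_atTop, tendsto_zero_iff_norm_tendsto_zero]
  refine squeeze_zero (fun n => norm_nonneg _) (fun n => ?_) hb
  rw [norm_mul, norm_pow]
  gcongr

/-- When `z₀` is a root of `∑ bₙ Xⁿ`, these are the coefficients of `(∑ bₙ Xⁿ) / (X - z₀)`. -/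
noncomputable def divXSubCoeff (b : ℕ → L) (z₀ : L) (j : ℕ) : L :=
  ∑' i, b (j + 1 + i) * z₀ ^ i

lemma tsum_mul_pow_sub_tsum_mul_pow (hr : 0 < r)
    (hb : Tendsto (fun n => ‖b n‖ * r ^ n) atTop (𝓝 0)) {z z₀ : L} (hz : ‖z‖ ≤ r)
    (hz₀ : ‖z₀‖ ≤ r) :
    ∑' n, b n * z ^ n - ∑' n, b n * z₀ ^ n = (z - z₀) * ∑' j, divXSubCoeff b z₀ j * z ^ j := by
  -- Removing `h (·, 0)` resp. `h (0, ·)` (the two series) from `∑ h` leaves two shifts of `h`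
  -- that differ termwise by `(z - z₀) * w`.
  set h : ℕ × ℕ → L := fun q => b (q.1 + q.2) * z ^ q.1 * z₀ ^ q.2
  set w : ℕ × ℕ → L := fun q => b (q.1 + 1 + q.2) * z₀ ^ q.2 * z ^ q.1
  have hh : Summable h := summable_of_norm_le_of_tendsto hb fun q => by
    simp only [h, norm_mul, norm_pow, pow_add, mul_assoc]
    gcongr
  have hw : Summable w := by
    refine summable_of_norm_le_of_tendsto (B := fun l => ‖b (1 + l)‖ * r ^ l)
      (tendsto_shift_mul_pow hr hb 1) fun q => ?_
    simp only [w, norm_mul, norm_pow, add_comm 1 (q.1 + q.2), add_right_comm q.1 1 q.2]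
    calc ‖b (q.1 + q.2 + 1)‖ * ‖z₀‖ ^ q.2 * ‖z‖ ^ q.1
        ≤ ‖b (q.1 + q.2 + 1)‖ * r ^ q.2 * r ^ q.1 := by gcongr
      _ = ‖b (q.1 + q.2 + 1)‖ * r ^ (q.1 + q.2) := by ring
  have hshift : ∀ q : ℕ × ℕ, h (q.1 + 1, q.2) - h (q.1, q.2 + 1) = (z - z₀) * w q := fun q => by
    simp only [h, w, add_right_comm q.1 1 q.2, ← add_assoc]
    ring
  have hrow : ∑' j, h (j, 0) = ∑' n, b n * z ^ n := tsum_congr fun j => by simp [h]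
  have hcol : ∑' i, h (0, i) = ∑' n, b n * z₀ ^ n := tsum_congr fun i => by simp [h]
  calc ∑' n, b n * z ^ n - ∑' n, b n * z₀ ^ n
      = ∑' q : ℕ × ℕ, h (q.1 + 1, q.2) - ∑' q : ℕ × ℕ, h (q.1, q.2 + 1) := by
        linear_combination
          hh.tsum_prod_eq_zero_add_fst - hh.tsum_prod_eq_zero_add_snd - hrow + hcol
    _ = (z - z₀) * ∑' q, w q := by
        rw [← hh.comp_succ_fst.tsum_sub hh.comp_succ_snd, tsum_congr hshift, tsum_mul_left]
    _ = (z - z₀) * ∑' j, divXSubCoeff b z₀ j * z ^ j := by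
        rw [hw.tsum_prod]
        simp only [w, divXSubCoeff, tsum_mul_right]

lemma summable_divXSubCoeff_terms (hr : 0 < r)
    (hb : Tendsto (fun n => ‖b n‖ * r ^ n) atTop (𝓝 0)) {z₀ : L} (hz₀ : ‖z₀‖ ≤ r) (j : ℕ) :
    Summable fun i => b (j + 1 + i) * z₀ ^ i :=
  summable_mul_pow_of_tendsto (tendsto_shift_mul_pow hr hb (j + 1)) hz₀

lemma norm_divXSubCoeff_mul_pow_lt (hr : 0 < r)
    (hb : Tendsto (fun n => ‖b n‖ * r ^ n) atTop (𝓝 0)) {z₀ : L} (hz₀ : ‖z₀‖ ≤ r) {j : ℕ}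
    {c : ℝ} (hc : ∀ i, ‖b (j + 1 + i)‖ * r ^ (j + 1 + i) < c) :
    ‖divXSubCoeff b z₀ j‖ * r ^ (j + 1) < c := by
  refine (lt_div_iff₀ (by positivity)).1
    (norm_tsum_lt_of_forall_lt (summable_divXSubCoeff_terms hr hb hz₀ j) fun i => ?_)
  rw [lt_div_iff₀ (by positivity), norm_mul, norm_pow]
  calc ‖b (j + 1 + i)‖ * ‖z₀‖ ^ i * r ^ (j + 1)
      ≤ ‖b (j + 1 + i)‖ * r ^ i * r ^ (j + 1) := by gcongr
    _ = ‖b (j + 1 + i)‖ * r ^ (j + 1 + i) := by ring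
    _ < c := hc i

lemma tendsto_norm_divXSubCoeff_mul_pow (hr : 0 < r)
    (hb : Tendsto (fun n => ‖b n‖ * r ^ n) atTop (𝓝 0)) {z₀ : L} (hz₀ : ‖z₀‖ ≤ r) :
    Tendsto (fun j => ‖divXSubCoeff b z₀ j‖ * r ^ j) atTop (𝓝 0) := by
  refine tendsto_order.2 ⟨fun a ha => Eventually.of_forall fun j => ha.trans_le (by positivity),
    fun ε hε => ?_⟩
  obtain ⟨K, hK⟩ := eventually_atTop.1 ((tendsto_order.1 hb).2 (ε * r) (by positivity))
  refine eventually_atTop.2 ⟨K, fun j hj => ?_⟩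
  have h := norm_divXSubCoeff_mul_pow_lt hr hb hz₀ fun i => hK (j + 1 + i) (by omega)
  rw [pow_succ, ← mul_assoc] at h
  exact lt_of_mul_lt_mul_right h hr.le

lemma norm_divXSubCoeff_eq (hr : 0 < r)
    (hb : Tendsto (fun n => ‖b n‖ * r ^ n) atTop (𝓝 0)) {z₀ : L} (hz₀ : ‖z₀‖ ≤ r) {n : ℕ}
    (hdom : ∀ m, n + 1 < m → ‖b m‖ * r ^ m < ‖b (n + 1)‖ * r ^ (n + 1)) :
    ‖divXSubCoeff b z₀ n‖ = ‖b (n + 1)‖ := by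
  have htail : ‖∑' i, b (n + 1 + (i + 1)) * z₀ ^ (i + 1)‖ < ‖b (n + 1)‖ := by
    refine norm_tsum_lt_of_forall_lt
      ((summable_nat_add_iff 1).2 (summable_divXSubCoeff_terms hr hb hz₀ n)) fun i => ?_
    refine lt_of_mul_lt_mul_right (a := r ^ (n + 1)) ?_ (by positivity)
    rw [norm_mul, norm_pow]
    calc ‖b (n + 1 + (i + 1))‖ * ‖z₀‖ ^ (i + 1) * r ^ (n + 1)
        ≤ ‖b (n + 1 + (i + 1))‖ * r ^ (i + 1) * r ^ (n + 1) := by gcongr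
      _ = ‖b (n + 1 + (i + 1))‖ * r ^ (n + 1 + (i + 1)) := by ring
      _ < ‖b (n + 1)‖ * r ^ (n + 1) := hdom _ (by omega)
  rw [divXSubCoeff, (summable_divXSubCoeff_terms hr hb hz₀ n).tsum_eq_zero_add, pow_zero,
    mul_one, add_zero]
  exact norm_add_eq_left_of_norm_lt htail

lemma norm_divXSubCoeff_mul_pow_lt_of_lt (hr : 0 < r)
    (hb : Tendsto (fun n => ‖b n‖ * r ^ n) atTop (𝓝 0)) {z₀ : L} (hz₀ : ‖z₀‖ ≤ r) {n : ℕ}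
    (hdom : ∀ m, n + 1 < m → ‖b m‖ * r ^ m < ‖b (n + 1)‖ * r ^ (n + 1)) (m : ℕ) (hm : n < m) :
    ‖divXSubCoeff b z₀ m‖ * r ^ m < ‖divXSubCoeff b z₀ n‖ * r ^ n := by
  have h := norm_divXSubCoeff_mul_pow_lt hr hb hz₀ fun i => hdom (m + 1 + i) (by omega)
  rw [← norm_divXSubCoeff_eq hr hb hz₀ hdom, pow_succ, pow_succ, ← mul_assoc, ← mul_assoc] at h
  exact lt_of_mul_lt_mul_right h hr.le

def closedBallZeros (b : ℕ → L) (r : ℝ) : Set L :=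
  {z | ‖z‖ ≤ r ∧ ∑' n, b n * z ^ n = 0}

lemma closedBallZeros_eq_empty (hb : Tendsto (fun n => ‖b n‖ * r ^ n) atTop (𝓝 0))
    (hdom : ∀ m, 0 < m → ‖b m‖ * r ^ m < ‖b 0‖) : closedBallZeros b r = ∅ := by
  refine Set.eq_empty_of_forall_notMem fun z ⟨hz, hzero⟩ => ?_
  have hr : 0 ≤ r := (norm_nonneg z).trans hz
  have htail : ‖∑' n, b (n + 1) * z ^ (n + 1)‖ < ‖b 0‖ := by
    refine norm_tsum_lt_of_forall_lt
      ((summable_nat_add_iff 1).2 (summable_mul_pow_of_tendsto hb hz)) fun n => ?_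
    rw [norm_mul, norm_pow]
    exact (by gcongr : ‖b (n + 1)‖ * ‖z‖ ^ (n + 1) ≤ ‖b (n + 1)‖ * r ^ (n + 1)).trans_lt
      (hdom _ n.succ_pos)
  rw [(summable_mul_pow_of_tendsto hb hz).tsum_eq_zero_add, pow_zero, mul_one] at hzero
  have h := norm_add_eq_left_of_norm_lt htail
  rw [hzero, norm_zero] at h
  exact htail.not_ge (h ▸ norm_nonneg _)

lemma closedBallZeros_subset_insert (hr : 0 < r)
    (hb : Tendsto (fun n => ‖b n‖ * r ^ n) atTop (𝓝 0)) {z₀ : L}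
    (hz₀ : z₀ ∈ closedBallZeros b r) :
    closedBallZeros b r ⊆ insert z₀ (closedBallZeros (divXSubCoeff b z₀) r) := by
  rintro z ⟨hz, hzero⟩
  have h := tsum_mul_pow_sub_tsum_mul_pow hr hb hz hz₀.1
  rw [hzero, hz₀.2, sub_zero, eq_comm, mul_eq_zero, sub_eq_zero] at h
  exact h.imp id fun h => ⟨hz, h⟩

theorem encard_closedBallZeros_le (hr : 0 < r) (n : ℕ)
    (hb : Tendsto (fun n => ‖b n‖ * r ^ n) atTop (𝓝 0))
    (hdom : ∀ m, n < m → ‖b m‖ * r ^ m < ‖b n‖ * r ^ n) :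
    (closedBallZeros b r).encard ≤ n := by
  induction n generalizing b with
  | zero =>
    simp only [pow_zero, mul_one] at hdom
    simp [closedBallZeros_eq_empty hb hdom]
  | succ n ih =>
    obtain h | ⟨z₀, hz₀⟩ := (closedBallZeros b r).eq_empty_or_nonempty
    · simp [h]
    calc (closedBallZeros b r).encard
        ≤ (insert z₀ (closedBallZeros (divXSubCoeff b z₀) r)).encard :=
          Set.encard_le_encard (closedBallZeros_subset_insert hr hb hz₀)
      _ ≤ (closedBallZeros (divXSubCoeff b z₀) r).encard + 1 := Set.encard_insert_le _ _
      _ ≤ n + 1 := by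
          gcongr
          exact ih (tendsto_norm_divXSubCoeff_mul_pow hr hb hz₀.1)
            (norm_divXSubCoeff_mul_pow_lt_of_lt hr hb hz₀.1 hdom)

end PowerSeries

lemma infinite_ball_zero_one {L : Type*} [NormedField L] {x : L} (hx0 : 0 < ‖x‖)
    (hx1 : ‖x‖ < 1) : (Metric.ball (0 : L) 1).Infinite := by
  refine Set.infinite_of_injective_forall_mem (f := fun j : ℕ => x ^ (j + 1))
    (fun i j h => ?_) fun j => ?_
  · have h' := congrArg norm h
    simp only [norm_pow] at h'
    exact Nat.succ_injective (pow_right_injective₀ hx0 hx1.ne h')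
  · rw [mem_ball_zero_iff, norm_pow]
    exact pow_lt_one₀ (norm_nonneg _) hx1 j.succ_ne_zero

section PAdic

variable (p : ℕ) [Fact p.Prime]

lemma inv_prime_pos : 0 < (p : ℝ)⁻¹ := by simp [(Fact.out : p.Prime).pos]

lemma inv_prime_lt_one : (p : ℝ)⁻¹ < 1 :=
  inv_lt_one_of_one_lt₀ (by exact_mod_cast (Fact.out : p.Prime).one_lt)

lemma antitone_inv_prime_pow : Antitone fun n : ℕ => (p : ℝ)⁻¹ ^ n :=
  fun _ _ h => pow_le_pow_of_le_one (inv_prime_pos p).le (inv_prime_lt_one p).le h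

variable {p}

lemma two_mul_padicValNat_factorial_lt (hp : Odd p) {m : ℕ} (hm : m ≠ 0) :
    2 * padicValNat p m ! < m := by
  have h3 : 3 ≤ p := by
    obtain ⟨j, rfl⟩ := hp
    have := (Fact.out : (2 * j + 1).Prime).two_le
    omega
  calc 2 * padicValNat p m ! ≤ (p - 1) * padicValNat p m ! := by gcongr; omega
    _ < m := sub_one_mul_padicValNat_factorial_lt_of_ne_zero p hm

lemma norm_le_inv_of_norm_lt_one {L : Type*} [NormedField L]
    (hur : ∀ y : L, y ≠ 0 → ∃ n : ℤ, ‖y‖ = (p : ℝ) ^ n) {x : L} (hx : ‖x‖ < 1) :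
    ‖x‖ ≤ (p : ℝ)⁻¹ := by
  obtain rfl | hx0 := eq_or_ne x 0
  · simp
  have hp : (1 : ℝ) < p := by exact_mod_cast (Fact.out : p.Prime).one_lt
  obtain ⟨n, hn⟩ := hur x hx0
  rw [hn, zpow_lt_one_iff_right₀ hp] at hx
  rw [hn, ← zpow_neg_one]
  exact zpow_le_zpow_right₀ hp.le (by omega)

variable {L : Type*} [NormedField L] [Algebra ℚ_[p] L]

lemma norm_natCast_eq_norm_padic (hext : ∀ q : ℚ_[p], ‖algebraMap ℚ_[p] L q‖ = ‖q‖) (n : ℕ) :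
    ‖(n : L)‖ = ‖(n : ℚ_[p])‖ := by
  rw [← map_natCast (algebraMap ℚ_[p] L), hext]

lemma norm_prime_eq (hext : ∀ q : ℚ_[p], ‖algebraMap ℚ_[p] L q‖ = ‖q‖) :
    ‖(p : L)‖ = (p : ℝ)⁻¹ := by
  rw [norm_natCast_eq_norm_padic hext, Padic.norm_p]

lemma norm_factorial_eq (hext : ∀ q : ℚ_[p], ‖algebraMap ℚ_[p] L q‖ = ‖q‖) (m : ℕ) :
    ‖(m ! : L)‖ = (p : ℝ)⁻¹ ^ padicValNat p m ! := by
  rw [norm_natCast_eq_norm_padic hext,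
    Padic.norm_eq_zpow_neg_valuation (Nat.cast_ne_zero.2 m.factorial_ne_zero),
    Padic.valuation_natCast, zpow_neg, zpow_natCast, inv_pow]

lemma norm_mul_pow_div_factorial_le (hext : ∀ q : ℚ_[p], ‖algebraMap ℚ_[p] L q‖ = ‖q‖)
    (hp : Odd p) {c x : L} (hc : ‖c‖ ≤ 1) (hx : ‖x‖ ≤ (p : ℝ)⁻¹) (m : ℕ) :
    ‖c * x ^ m / (m ! : L)‖ ≤ (p : ℝ)⁻¹ ^ ((m + 1) / 2) := by
  have hv : (m + 1) / 2 + padicValNat p m ! ≤ m := by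
    rcases eq_or_ne m 0 with rfl | hm
    · simp
    · have := two_mul_padicValNat_factorial_lt hp hm
      omega
  rw [mul_div_assoc, norm_mul, norm_div, norm_pow, norm_factorial_eq hext]
  calc ‖c‖ * (‖x‖ ^ m / (p : ℝ)⁻¹ ^ padicValNat p m !)
      ≤ 1 * ((p : ℝ)⁻¹ ^ m / (p : ℝ)⁻¹ ^ padicValNat p m !) := by gcongr
    _ ≤ (p : ℝ)⁻¹ ^ ((m + 1) / 2) := by
      rw [one_mul, div_le_iff₀ (pow_pos (inv_prime_pos p) _), ← pow_add]
      exact antitone_inv_prime_pow p hv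

variable [IsUltrametricDist L]

lemma norm_pow_sub_pow_div_factorial_le (hext : ∀ q : ℚ_[p], ‖algebraMap ℚ_[p] L q‖ = ‖q‖)
    {x y : L} (hx : ‖x‖ ≤ (p : ℝ)⁻¹) (hy : ‖y‖ ≤ (p : ℝ)⁻¹) (m : ℕ) :
    ‖(x ^ m - y ^ m) / (m ! : L)‖ ≤ ‖x - y‖ := by
  have hv : padicValNat p m ! ≤ m - 1 := by
    rcases eq_or_ne m 0 with rfl | hm
    · simp
    · exact Nat.le_sub_one_of_lt (padicValNat_factorial_lt_of_ne_zero p hm)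
  rw [norm_div, norm_factorial_eq hext, div_le_iff₀ (pow_pos (inv_prime_pos p) _), mul_comm]
  calc ‖x ^ m - y ^ m‖ ≤ (p : ℝ)⁻¹ ^ (m - 1) * ‖x - y‖ := norm_pow_sub_pow_le hx hy m
    _ ≤ (p : ℝ)⁻¹ ^ padicValNat p m ! * ‖x - y‖ :=
      mul_le_mul_of_nonneg_right (antitone_inv_prime_pow p hv) (norm_nonneg _)

end PAdic

section DividedPowerSeries

/-- `F(s, z)` -/
noncomputable def dividedPowerEval {L : Type*} [NormedField L] (a : ℕ × ℕ → L) (s z : L) : L :=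
  ∑' q : ℕ × ℕ, a q * s ^ q.1 * z ^ q.2 / ((q.1 ! : L) * (q.2 ! : L))

/-- `c_n(s)`, the coefficient of `zⁿ / n!` in `F(s, z)` -/
noncomputable def dividedPowerCoeff {L : Type*} [NormedField L] (a : ℕ × ℕ → L) (s : L)
    (n : ℕ) : L :=
  ∑' m, a (m, n) * s ^ m / (m ! : L)

lemma tendsto_pow_succ_div_two_atTop {r : ℝ} (hr0 : 0 ≤ r) (hr1 : r < 1) :
    Tendsto (fun m : ℕ => r ^ ((m + 1) / 2)) atTop (𝓝 0) :=
  (tendsto_pow_atTop_nhds_zero_of_lt_one hr0 hr1).comp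
    (tendsto_atTop_atTop.2 fun K => ⟨2 * K, fun m hm => by omega⟩)

variable {p : ℕ} [Fact p.Prime] {L : Type*} [NormedField L] [IsUltrametricDist L]
  [Algebra ℚ_[p] L] {a : ℕ × ℕ → L}

lemma norm_dividedPowerCoeff_le_one (hext : ∀ q : ℚ_[p], ‖algebraMap ℚ_[p] L q‖ = ‖q‖)
    (hp : Odd p) (ha : ∀ q, ‖a q‖ ≤ 1) {s : L} (hs : ‖s‖ ≤ (p : ℝ)⁻¹) (n : ℕ) :
    ‖dividedPowerCoeff a s n‖ ≤ 1 :=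
  IsUltrametricDist.norm_tsum_le_of_forall_le_of_nonneg zero_le_one fun m =>
    (norm_mul_pow_div_factorial_le hext hp (ha _) hs m).trans
      (pow_le_one₀ (inv_prime_pos p).le (inv_prime_lt_one p).le)

variable [CompleteSpace L]

lemma summable_dividedPowerCoeff_terms (hext : ∀ q : ℚ_[p], ‖algebraMap ℚ_[p] L q‖ = ‖q‖)
    (hp : Odd p) (ha : ∀ q, ‖a q‖ ≤ 1) {s : L} (hs : ‖s‖ ≤ (p : ℝ)⁻¹) (n : ℕ) :
    Summable fun m => a (m, n) * s ^ m / (m ! : L) := by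
  refine NonarchimedeanAddGroup.summable_of_tendsto_cofinite_zero ?_
  rw [Nat.cofinite_eq_atTop, tendsto_zero_iff_norm_tendsto_zero]
  exact squeeze_zero (fun m => norm_nonneg _)
    (fun m => norm_mul_pow_div_factorial_le hext hp (ha _) hs m)
    (tendsto_pow_succ_div_two_atTop (inv_prime_pos p).le (inv_prime_lt_one p))

lemma norm_dividedPowerCoeff_sub_le (hext : ∀ q : ℚ_[p], ‖algebraMap ℚ_[p] L q‖ = ‖q‖)
    (hp : Odd p) (ha : ∀ q, ‖a q‖ ≤ 1) {s s₀ : L} (hs : ‖s‖ ≤ (p : ℝ)⁻¹)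
    (hs₀ : ‖s₀‖ ≤ (p : ℝ)⁻¹) (n : ℕ) :
    ‖dividedPowerCoeff a s n - dividedPowerCoeff a s₀ n‖ ≤ ‖s - s₀‖ := by
  rw [dividedPowerCoeff, dividedPowerCoeff,
    ← (summable_dividedPowerCoeff_terms hext hp ha hs n).tsum_sub
      (summable_dividedPowerCoeff_terms hext hp ha hs₀ n)]
  refine IsUltrametricDist.norm_tsum_le_of_forall_le_of_nonneg (norm_nonneg _) fun m => ?_
  rw [← sub_div, ← mul_sub, mul_div_assoc, norm_mul]
  exact (mul_le_of_le_one_left (norm_nonneg _) (ha _)).trans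
    (norm_pow_sub_pow_div_factorial_le hext hs hs₀ m)

lemma dividedPowerEval_eq_tsum (hext : ∀ q : ℚ_[p], ‖algebraMap ℚ_[p] L q‖ = ‖q‖)
    (hp : Odd p) (ha : ∀ q, ‖a q‖ ≤ 1) {s z : L} (hs : ‖s‖ ≤ (p : ℝ)⁻¹)
    (hz : ‖z‖ ≤ (p : ℝ)⁻¹) :
    dividedPowerEval a s z = ∑' n, dividedPowerCoeff a s n / (n ! : L) * z ^ n := by
  have hsum : Summable fun q : ℕ × ℕ =>
      a q * s ^ q.1 * z ^ q.2 / ((q.1 ! : L) * (q.2 ! : L)) := by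
    refine summable_of_norm_le_of_tendsto
      (tendsto_pow_succ_div_two_atTop (inv_prime_pos p).le (inv_prime_lt_one p)) fun q => ?_
    rw [show a q * s ^ q.1 * z ^ q.2 / ((q.1 ! : L) * (q.2 ! : L))
        = a q * s ^ q.1 / (q.1 ! : L) * (1 * z ^ q.2 / (q.2 ! : L)) by ring, norm_mul]
    calc _ ≤ (p : ℝ)⁻¹ ^ ((q.1 + 1) / 2) * (p : ℝ)⁻¹ ^ ((q.2 + 1) / 2) :=
          mul_le_mul (norm_mul_pow_div_factorial_le hext hp (ha q) hs _)
            (norm_mul_pow_div_factorial_le hext hp norm_one.le hz _) (norm_nonneg _)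
            (pow_nonneg (inv_prime_pos p).le _)
      _ ≤ (p : ℝ)⁻¹ ^ ((q.1 + q.2 + 1) / 2) := by
          rw [← pow_add]
          exact antitone_inv_prime_pow p (by omega)
  have hcomm := Summable.tsum_comm
    (f := fun m n => a (m, n) * s ^ m * z ^ n / ((m ! : L) * (n ! : L))) hsum
  rw [dividedPowerEval, hsum.tsum_prod, ← hcomm]
  refine tsum_congr fun n => ?_
  calc ∑' m, a (m, n) * s ^ m * z ^ n / ((m ! : L) * (n ! : L))
      = ∑' m, a (m, n) * s ^ m / (m ! : L) * (z ^ n / (n ! : L)) :=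
        tsum_congr fun m => by ring
    _ = dividedPowerCoeff a s n / (n ! : L) * z ^ n := by
      rw [tsum_mul_right, dividedPowerCoeff]
      ring

theorem encard_zeros_dividedPowerEval_le (hext : ∀ q : ℚ_[p], ‖algebraMap ℚ_[p] L q‖ = ‖q‖)
    (hur : ∀ y : L, y ≠ 0 → ∃ n : ℤ, ‖y‖ = (p : ℝ) ^ n) (hp : Odd p) (ha : ∀ q, ‖a q‖ ≤ 1)
    {s : L} (hs : ‖s‖ ≤ (p : ℝ)⁻¹) {k n₀ : ℕ}
    (hc : (p : ℝ)⁻¹ ^ k < ‖dividedPowerCoeff a s n₀‖) :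
    {z : L | ‖z‖ < 1 ∧ dividedPowerEval a s z = 0}.encard ≤ (2 * (k + n₀) : ℕ) := by
  set r : ℝ := (p : ℝ)⁻¹
  set b : ℕ → L := fun n => dividedPowerCoeff a s n / (n ! : L)
  have hbr : ∀ n, ‖b n‖ * r ^ n = ‖dividedPowerCoeff a s n * (p : L) ^ n / (n ! : L)‖ :=
    fun n => by rw [mul_div_right_comm, norm_mul _ ((p : L) ^ n), norm_pow, norm_prime_eq hext]
  have hbound : ∀ n, ‖b n‖ * r ^ n ≤ r ^ ((n + 1) / 2) := fun n =>
    (hbr n).trans_le (norm_mul_pow_div_factorial_le hext hp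
      (norm_dividedPowerCoeff_le_one hext hp ha hs n) (norm_prime_eq hext).le n)
  have hlow : r ^ (k + n₀) < ‖b n₀‖ * r ^ n₀ := by
    rw [hbr, norm_div, norm_mul, norm_pow, norm_prime_eq hext, pow_add, norm_factorial_eq hext]
    calc r ^ k * r ^ n₀ < ‖dividedPowerCoeff a s n₀‖ * r ^ n₀ :=
          mul_lt_mul_of_pos_right hc (pow_pos (inv_prime_pos p) _)
      _ ≤ ‖dividedPowerCoeff a s n₀‖ * r ^ n₀ / r ^ padicValNat p n₀ ! :=
          le_div_self (by positivity) (pow_pos (inv_prime_pos p) _)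
            (pow_le_one₀ (inv_prime_pos p).le (inv_prime_lt_one p).le)
  obtain ⟨n, hn, hdom⟩ := exists_le_forall_lt_of_lt (f := fun n => ‖b n‖ * r ^ n)
    (N := 2 * (k + n₀)) (by omega) fun m hm =>
      (hbound m).trans_lt ((antitone_inv_prime_pow p (by omega)).trans_lt hlow)
  have hb : Tendsto (fun n => ‖b n‖ * r ^ n) atTop (𝓝 0) :=
    squeeze_zero (fun n => by positivity) hbound
      (tendsto_pow_succ_div_two_atTop (inv_prime_pos p).le (inv_prime_lt_one p))
  calc {z : L | ‖z‖ < 1 ∧ dividedPowerEval a s z = 0}.encard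
      ≤ (closedBallZeros b r).encard :=
        Set.encard_le_encard fun z ⟨hz, hzero⟩ => by
          have hz' := norm_le_inv_of_norm_lt_one hur hz
          exact ⟨hz', by rwa [← dividedPowerEval_eq_tsum hext hp ha hs hz']⟩
    _ ≤ n := encard_closedBallZeros_le (inv_prime_pos p) n hb hdom
    _ ≤ (2 * (k + n₀) : ℕ) := by exact_mod_cast hn

end DividedPowerSeries

theorem statement8_general (p : ℕ) [Fact p.Prime] (hp : Odd p) (L : Type*) [NormedField L]
    [CompleteSpace L] [IsUltrametricDist L]
    [Algebra ℚ_[p] L]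
    (hext : ∀ q : ℚ_[p], ‖algebraMap ℚ_[p] L q‖ = ‖q‖)
    (hur : ∀ y : L, y ≠ 0 → ∃ n : ℤ, ‖y‖ = (p : ℝ) ^ n)
    (k : ℕ)
    (a : ℕ × ℕ → L) (ha : ∀ q, ‖a q‖ ≤ 1)
    (s₀ : L) (hs₀ : ‖s₀‖ < 1)
    (hnz : ∃ n : ℕ,
      (p : ℝ) ^ (-(k : ℤ)) < ‖∑' m : ℕ, a (m, n) * s₀ ^ m / (m.factorial : L)‖) :
    ∃ N : ℕ, ∀ s : L, ‖s‖ < 1 → ‖s - s₀‖ ≤ (p : ℝ) ^ (-(k : ℤ)) →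
      ({z : L | ‖z‖ < 1 ∧
          ∑' q : ℕ × ℕ,
            a q * s ^ q.1 * z ^ q.2 / ((q.1.factorial : L) * (q.2.factorial : L)) = 0}.Finite ∧
        {z : L | ‖z‖ < 1 ∧
          ∑' q : ℕ × ℕ,
            a q * s ^ q.1 * z ^ q.2 / ((q.1.factorial : L) * (q.2.factorial : L)) = 0}.ncard ≤ N) ∧
      ∃ z : L, ‖z‖ < 1 ∧
        (∑' q : ℕ × ℕ,
          a q * s ^ q.1 * z ^ q.2 / ((q.1.factorial : L) * (q.2.factorial : L))) ≠ 0 := by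
  obtain ⟨n₀, hn₀⟩ := hnz
  have hpk : (p : ℝ) ^ (-(k : ℤ)) = (p : ℝ)⁻¹ ^ k := by rw [zpow_neg, zpow_natCast, inv_pow]
  replace hn₀ : (p : ℝ)⁻¹ ^ k < ‖dividedPowerCoeff a s₀ n₀‖ := hpk ▸ hn₀
  refine ⟨2 * (k + n₀), fun s hs hss₀ => ?_⟩
  have hsr := norm_le_inv_of_norm_lt_one hur hs
  have hcoeff : (p : ℝ)⁻¹ ^ k < ‖dividedPowerCoeff a s n₀‖ := by
    have hdiff := norm_dividedPowerCoeff_sub_le hext hp ha hsr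
      (norm_le_inv_of_norm_lt_one hur hs₀) n₀
    rw [← add_sub_cancel (dividedPowerCoeff a s₀ n₀) (dividedPowerCoeff a s n₀),
      norm_add_eq_left_of_norm_lt ((hdiff.trans (hpk ▸ hss₀)).trans_lt hn₀)]
    exact hn₀
  have hzeros := Set.encard_le_coe_iff_finite_ncard_le.1
    (encard_zeros_dividedPowerEval_le hext hur hp ha hsr hcoeff)
  refine ⟨hzeros, ?_⟩
  by_contra! hvanish
  have hp0 : 0 < ‖(p : L)‖ := by rw [norm_prime_eq hext]; exact inv_prime_pos p
  have hp1 : ‖(p : L)‖ < 1 := by rw [norm_prime_eq hext]; exact inv_prime_lt_one p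
  refine (infinite_ball_zero_one hp0 hp1).mono (fun z hz => ?_) hzeros.1
  exact ⟨mem_ball_zero_iff.1 hz, hvanish z (mem_ball_zero_iff.1 hz)⟩

/-- if some specialized coefficient `c_n(s₀) = Σ_m a_{m,n} s₀^m / m!` of a
two-variable divided-power series over `O_L` has absolute value `> p^{-k}`, then there
is a uniform bound `N` on the number of zeroes `z ∈ m_L` of `z ↦ F(s, z)` for all
`s ∈ m_L` with `|s - s₀| ≤ p^{-k}`; in particular `z ↦ F(s, z)` is not identically zero
on `m_L` for such `s`. Here `p` is odd and `L/ℚ_p` is finite unramified. -/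
theorem statement8 (p : ℕ) [Fact p.Prime] (hp : Odd p) (L : Type*) [NormedField L]
    [CompleteSpace L] [IsUltrametricDist L] [CharZero L]
    [Algebra ℚ_[p] L] [FiniteDimensional ℚ_[p] L]
    (hext : ∀ q : ℚ_[p], ‖algebraMap ℚ_[p] L q‖ = ‖q‖)
    (hur : ∀ y : L, y ≠ 0 → ∃ n : ℤ, ‖y‖ = (p : ℝ) ^ n)
    (k : ℕ) (hk : 1 ≤ k)
    (a : ℕ × ℕ → L) (ha : ∀ q, ‖a q‖ ≤ 1)
    (s₀ : L) (hs₀ : ‖s₀‖ < 1)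
    (hnz : ∃ n : ℕ,
      (p : ℝ) ^ (-(k : ℤ)) < ‖∑' m : ℕ, a (m, n) * s₀ ^ m / (m.factorial : L)‖) :
    ∃ N : ℕ, ∀ s : L, ‖s‖ < 1 → ‖s - s₀‖ ≤ (p : ℝ) ^ (-(k : ℤ)) →
      ({z : L | ‖z‖ < 1 ∧
          ∑' q : ℕ × ℕ,
            a q * s ^ q.1 * z ^ q.2 / ((q.1.factorial : L) * (q.2.factorial : L)) = 0}.Finite ∧
        {z : L | ‖z‖ < 1 ∧
          ∑' q : ℕ × ℕ,
            a q * s ^ q.1 * z ^ q.2 / ((q.1.factorial : L) * (q.2.factorial : L)) = 0}.ncard ≤ N) ∧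
      ∃ z : L, ‖z‖ < 1 ∧
        (∑' q : ℕ × ℕ,
          a q * s ^ q.1 * z ^ q.2 / ((q.1.factorial : L) * (q.2.factorial : L))) ≠ 0 :=
  statement8_general p hp L hext hur k a ha s₀ hs₀ hnz
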